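/- arXiv:1508.02092 — 5 statements merged into one kernel-verified Lean document; each statement's English description precedes it below -/
import Mathlib

section
/- If N is a generalized square root of a matrix M (i.e., N Nᵀ = M) and O is an orthogonal matrix, then N O is also a generalized square root of M. Conversely, if N and N' are two generalized square roots of a nonsingular M, then there exists an orthogonal matrix O with N' = N O. -/
open Matrix

/-- If `N` is a generalized square root of `M` (`N Nᵀ = M`) and `O` is orthogonal, then
`N O` is also a generalized square root of `M`. Conversely, if `N` and `N'` are two
generalized square roots of a nonsingular `M`, then `N' = N O` for some orthogonal `O`. -/
theorem stmt_1 {n : ℕ} (M : Matrix (Fin n) (Fin n) ℝ) :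
    (∀ N O : Matrix (Fin n) (Fin n) ℝ, N * Nᵀ = M → O * Oᵀ = 1 →
      (N * O) * (N * O)ᵀ = M) ∧
    (IsUnit M.det → ∀ N N' : Matrix (Fin n) (Fin n) ℝ, N * Nᵀ = M → N' * N'ᵀ = M →
      ∃ O : Matrix (Fin n) (Fin n) ℝ, O * Oᵀ = 1 ∧ N' = N * O) := by
  constructor
  · intro N O hN hO
    calc (N * O) * (N * O)ᵀ = N * (O * Oᵀ) * Nᵀ := by
          simp [Matrix.transpose_mul, Matrix.mul_assoc]
      _ = M := by rw [hO]; simpa using hN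
  · intro hM N N' hN hN'
    have hNdet : IsUnit N.det := by
      have : N.det * Nᵀ.det = M.det := by rw [← Matrix.det_mul, hN]
      rw [Matrix.det_transpose] at this
      exact isUnit_of_mul_isUnit_left (this ▸ hM)
    have hNinv : Invertible N := N.invertibleOfIsUnitDet hNdet
    refine ⟨N⁻¹ * N', ?_, ?_⟩
    · have hNt : Invertible Nᵀ := N.transpose.invertibleOfIsUnitDet (by
        rwa [Matrix.det_transpose])
      calc (N⁻¹ * N') * (N⁻¹ * N')ᵀ
          = N⁻¹ * (N' * N'ᵀ) * (N⁻¹)ᵀ := by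
            simp [Matrix.transpose_mul, Matrix.mul_assoc]
        _ = N⁻¹ * (N * Nᵀ) * (N⁻¹)ᵀ := by rw [hN', hN]
        _ = 1 := by
            rw [Matrix.transpose_nonsing_inv]
            rw [← Matrix.mul_assoc, Matrix.nonsing_inv_mul _ hNdet, Matrix.one_mul,
              Matrix.mul_nonsing_inv _ (by rwa [Matrix.det_transpose])]
    · rw [← Matrix.mul_assoc, Matrix.mul_nonsing_inv _ hNdet, Matrix.one_mul]
end

section
/- Let Σ be a positive definite n×n matrix with Σ⁻¹ 𝟏 > 0 (componentwise), and let N be a standard square root of Σ (N Nᵀ = Σ and N e₁ a positive multiple of 𝟏). Then every nonzero u in the cone C_N := {u : N u ≥ 0} satisfies e₁ᵀ u > 0; i.e., C_N \ {0} lies in the open half-space {w : w₁ > 0}. -/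
open Matrix

/-- If `Σ` is positive definite with `Σ⁻¹ 𝟏 > 0` componentwise and `N` is a standard square
root of `Σ`, then every nonzero `u` in the cone `C_N = {u : N u ≥ 0}` satisfies `e₁ᵀ u > 0`;
that is, `C_N \ {0}` lies in the open half-space `{w : w₁ > 0}`. -/
theorem stmt_6 {n : ℕ} [NeZero n] (S N : Matrix (Fin n) (Fin n) ℝ)
    (hS : S.PosDef)
    (hpos : ∀ i, 0 < S⁻¹.mulVec (fun _ => (1 : ℝ)) i)
    (hN : N * Nᵀ = S)
    (hstd : ∃ c : ℝ, 0 < c ∧ N.mulVec (Pi.single 0 1) = c • (fun _ => (1 : ℝ))) :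
    ∀ u : Fin n → ℝ, u ≠ 0 → (∀ i, 0 ≤ N.mulVec u i) → 0 < u 0 := by
  obtain ⟨c, hc, hce⟩ := hstd
  intro u hu hNu
  -- N has unit determinant
  have hdetS : S.det ≠ 0 := ne_of_gt hS.det_pos
  have hdetN : IsUnit N.det := by
    have : N.det * Nᵀ.det = S.det := by rw [← det_mul, hN]
    rw [det_transpose] at this
    refine isUnit_iff_ne_zero.mpr ?_
    intro h
    rw [h, zero_mul] at this
    exact hdetS this.symm
  have hdetNT : IsUnit Nᵀ.det := by rwa [det_transpose]
  -- key identity : Nᵀ * S⁻¹ = N⁻¹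
  have hkey : Nᵀ * S⁻¹ = N⁻¹ := by
    rw [← hN, Matrix.mul_inv_rev, ← mul_assoc, Matrix.mul_nonsing_inv _ hdetNT, one_mul]
  set one : Fin n → ℝ := (fun _ => (1 : ℝ)) with hone
  set w : Fin n → ℝ := S⁻¹.mulVec one with hw
  set v : Fin n → ℝ := N.mulVec u with hv
  -- Nᵀ w = N⁻¹ 𝟏 = c⁻¹ • e₁
  have h1 : Nᵀ.mulVec w = N⁻¹.mulVec one := by
    rw [hw, Matrix.mulVec_mulVec, hkey]
  have h2 : N⁻¹.mulVec one = c⁻¹ • (Pi.single 0 1 : Fin n → ℝ) := by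
    have := congrArg (fun x => N⁻¹.mulVec x) hce
    simp only [Matrix.mulVec_mulVec, Matrix.nonsing_inv_mul _ hdetN, Matrix.one_mulVec,
      Matrix.mulVec_smul] at this
    rw [this, smul_smul, inv_mul_cancel₀ (ne_of_gt hc), one_smul]
  -- v ≠ 0
  have hvne : v ≠ 0 := by
    intro h
    apply hu
    have := congrArg (fun x => N⁻¹.mulVec x) h
    simpa [hv, Matrix.mulVec_mulVec, Matrix.nonsing_inv_mul _ hdetN] using this
  -- dot product computation
  have hdot : w ⬝ᵥ v = c⁻¹ * u 0 := by
    rw [hv, Matrix.dotProduct_mulVec, ← Matrix.mulVec_transpose, h1, h2]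
    simp [dotProduct, Pi.single_apply, mul_comm]
  -- w ⬝ᵥ v > 0
  have hwpos : ∀ i, 0 < w i := hpos
  obtain ⟨i, hi⟩ : ∃ i, v i ≠ 0 := by
    by_contra h
    push_neg at h
    exact hvne (funext h)
  have hipos : 0 < w i * v i := mul_pos (hwpos i) (lt_of_le_of_ne (hNu i) (Ne.symm hi))
  have hsum : 0 < w ⬝ᵥ v := by
    apply Finset.sum_pos' (fun j _ => mul_nonneg (le_of_lt (hwpos j)) (hNu j))
    exact ⟨i, Finset.mem_univ i, hipos⟩
  rw [hdot] at hsum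
  have := mul_pos hc hsum
  rwa [← mul_assoc, mul_inv_cancel₀ (ne_of_gt hc), one_mul] at this
end

section
/- Let X = (X₁, X₂, X₃) ~ N(0, Σ) with Σ positive definite, let N be a standard square root of Σ, and set κ = √(𝟏ᵀ Σ⁻¹ 𝟏). Then for all t, Prob(min(X₁,X₂,X₃) ≥ t) = μ(tκ e₁ + C_N), where μ is the standard Gaussian measure N(0, I) on ℝ³ and C_N = {u : N u ≥ 0}. -/
open Matrix MeasureTheory

/-- The centered multivariate Gaussian measure `N(0, S)` on `ℝⁿ`, defined by its density
with respect to Lebesgue measure. -/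
noncomputable def gaussianOfCov {n : ℕ} (S : Matrix (Fin n) (Fin n) ℝ) :
    Measure (Fin n → ℝ) :=
  volume.withDensity fun u =>
    ENNReal.ofReal
      (((2 * Real.pi) ^ n * S.det) ^ (-(1 : ℝ) / 2) *
        Real.exp (-(1 / 2) * (u ⬝ᵥ S⁻¹.mulVec u)))

/-!
If `N` is invertible, pushing the standard Gaussian forward along `u ↦ N u` gives `N(0, N Nᵀ)`:
the change of variables contributes `|det N|⁻¹ = det (N Nᵀ)^(-1/2)` and turns `|N⁻¹ x|²` into
`xᵀ (N Nᵀ)⁻¹ x`. Hence `P(X ≥ t𝟏) = μ {u : N u ≥ t𝟏}`, and this set is the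
translate `tκ e₁ + C_N` because `N (κ e₁) = 𝟏` (invertibility of `N` rules out `κ = 0`).
-/

namespace MeasureTheory.Measure

variable {α β : Type*} [MeasurableSpace α] [MeasurableSpace β]

theorem map_withDensity_comp (μ : Measure α) {f : α → β} (hf : Measurable f) {g : β → ENNReal}
    (hg : Measurable g) : (μ.withDensity (g ∘ f)).map f = (μ.map f).withDensity g := by
  ext s hs
  rw [map_apply hf hs, withDensity_apply _ (hf hs), withDensity_apply _ hs,
    setLIntegral_map hs hg hf]
  rfl

end MeasureTheory.Measure

namespace Matrix

variable {n : Type*} [Fintype n]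

theorem preimage_mulVec_Ici_eq_image_add {R : Type*} [CommRing R] [PartialOrder R]
    [IsOrderedRing R] (N : Matrix n n R) {v : n → R} (hv : N *ᵥ v = fun _ => 1) (t : R) :
    N.mulVec ⁻¹' {x | ∀ i, t ≤ x i} = (fun u => t • v + u) '' {u | ∀ i, 0 ≤ (N *ᵥ u) i} := by
  ext u
  simp [Set.image_add_left, mulVec_add, mulVec_neg, mulVec_smul, hv]

variable [DecidableEq n]

theorem dotProduct_mulVec_mul_transpose_inv (N : Matrix n n ℝ) (x : n → ℝ) :
    x ⬝ᵥ (N * Nᵀ)⁻¹ *ᵥ x = N⁻¹ *ᵥ x ⬝ᵥ N⁻¹ *ᵥ x := by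
  rw [mul_inv_rev, ← transpose_nonsing_inv, ← mulVec_mulVec, dotProduct_mulVec, vecMul_transpose]

end Matrix

theorem gaussianOfCov_mul_transpose {n : ℕ} (N : Matrix (Fin n) (Fin n) ℝ) (hN : N.det ≠ 0) :
    gaussianOfCov (N * Nᵀ) = (gaussianOfCov 1).map N.mulVec := by
  set c : ℝ := ((2 * Real.pi) ^ n) ^ (-(1 : ℝ) / 2) with hc
  set g : (Fin n → ℝ) → ENNReal := fun x =>
    ENNReal.ofReal (c * Real.exp (-(1 / 2) * (N⁻¹ *ᵥ x ⬝ᵥ N⁻¹ *ᵥ x)))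
  have hmeas : Measurable N.mulVec := by fun_prop
  have hg : Measurable g := by unfold g; fun_prop
  have hone : gaussianOfCov 1 = volume.withDensity (g ∘ N.mulVec) := by
    simp [gaussianOfCov, g, c, Function.comp_def, mulVec_mulVec,
      nonsing_inv_mul N (isUnit_iff_ne_zero.mpr hN)]
  have hmap : volume.map N.mulVec = ENNReal.ofReal |N.det|⁻¹ • volume := by
    have hdet : LinearMap.det (toLin' N) ≠ 0 := by rwa [LinearMap.det_toLin']
    have := Real.map_linearMap_volume_pi_eq_smul_volume_pi hdet
    rwa [LinearMap.det_toLin', abs_inv] at this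
  rw [hone, Measure.map_withDensity_comp _ hmeas hg, hmap, withDensity_smul_measure,
    ← withDensity_smul' _ _ ENNReal.ofReal_ne_top, gaussianOfCov]
  congr 1
  funext x
  have hconst : ((2 * Real.pi) ^ n * (N * Nᵀ).det) ^ (-(1 : ℝ) / 2) = |N.det|⁻¹ * c := by
    rw [det_mul, det_transpose, Real.mul_rpow (by positivity) (mul_self_nonneg _), mul_comm,
      neg_div, Real.rpow_neg (mul_self_nonneg _), ← Real.sqrt_eq_rpow,
      Real.sqrt_mul_self_eq_abs, hc, neg_div]
  rw [Pi.smul_apply, smul_eq_mul, ← ENNReal.ofReal_mul (by positivity),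
    dotProduct_mulVec_mul_transpose_inv, hconst, mul_assoc]

theorem stmt_7_general (S N : Matrix (Fin 3) (Fin 3) ℝ)
    (hS : S.PosDef) (hN : N * Nᵀ = S)
    (κ : ℝ)
    (hstd : N.mulVec (Pi.single 0 1) = κ⁻¹ • (fun _ => (1 : ℝ)))
    (t : ℝ) :
    gaussianOfCov S {x | ∀ i, t ≤ x i} =
      gaussianOfCov (1 : Matrix (Fin 3) (Fin 3) ℝ)
        ((fun u => (t * κ) • (Pi.single 0 1 : Fin 3 → ℝ) + u) ''
          {u | ∀ i, 0 ≤ N.mulVec u i}) := by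
  have hNdet : N.det ≠ 0 := by
    have := hS.det_pos
    rw [← hN, det_mul, det_transpose] at this
    exact left_ne_zero_of_mul this.ne'
  have hκ : κ ≠ 0 := by
    rintro rfl
    rw [_root_.inv_zero, zero_smul] at hstd
    simpa using eq_zero_of_mulVec_eq_zero hNdet hstd
  have hv : N *ᵥ (κ • Pi.single 0 1) = fun _ => 1 := by
    rw [mulVec_smul, hstd, smul_smul, mul_inv_cancel₀ hκ, one_smul]
  simp_rw [mul_smul, ← preimage_mulVec_Ici_eq_image_add N hv, ← hN,
    gaussianOfCov_mul_transpose N hNdet]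
  exact Measure.map_apply (by fun_prop) (measurableSet_le measurable_const measurable_id)

/-- Let `X = (X₁,X₂,X₃) ~ N(0,Σ)` with `Σ` positive definite, `N` a standard square root of
`Σ`, and `κ = √(𝟏ᵀ Σ⁻¹ 𝟏)`. Then `Prob(min(X₁,X₂,X₃) ≥ t) = μ(tκ e₁ + C_N)`, where `μ` is
the standard Gaussian measure `N(0, I)` on `ℝ³` and `C_N = {u : N u ≥ 0}`. -/
theorem stmt_7 (S N : Matrix (Fin 3) (Fin 3) ℝ)
    (hS : S.PosDef) (hN : N * Nᵀ = S)
    (κ : ℝ) (hκ : κ = Real.sqrt ((fun _ => (1 : ℝ)) ⬝ᵥ S⁻¹.mulVec (fun _ => (1 : ℝ))))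
    (hstd : N.mulVec (Pi.single 0 1) = κ⁻¹ • (fun _ => (1 : ℝ)))
    (t : ℝ) :
    gaussianOfCov S {x | ∀ i, t ≤ x i} =
      gaussianOfCov (1 : Matrix (Fin 3) (Fin 3) ℝ)
        ((fun u => (t * κ) • (Pi.single 0 1 : Fin 3 → ℝ) + u) ''
          {u | ∀ i, 0 ≤ N.mulVec u i}) :=
  stmt_7_general S N hS hN κ hstd t
end

section
/- Let X = (X₁,…,Xₙ) ~ N(0, Σ) with Σ positive definite and Σ⁻¹𝟏 > 0, and set κ² = 𝟏ᵀ Σ⁻¹ 𝟏. Then ln Prob(min(X₁,…,Xₙ) ≥ t) ~ −t²κ²/2 as t → +∞; in particular κ² = −2 · lim_{t→∞} t⁻² ln Prob(minᵢ Xᵢ ≥ t). -/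
/-!
Write `q x = x ⬝ᵥ Σ⁻¹ *ᵥ x` and `w = Σ⁻¹ 𝟏`, so that `q (t • 𝟏 + v) = t²κ² + 2t (w ⬝ᵥ v) + q v`.
On the orthant `{x | ∀ i, t ≤ x i}` the shift `v = x - t • 𝟏` is nonnegative, so `w ⬝ᵥ v ≥ 0` and
the density at `x` is at most `exp (-t²κ²/2)` times the density at `v`. On the box
`t • 𝟏 + [0, 1]ⁿ` we have `w ⬝ᵥ v ≤ w ⬝ᵥ 𝟏 = κ²`, so the density at `x` is at least
`exp (-t²κ²/2 - tκ²)` times the density at `v`. By translation invariance of Lebesgue measure the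
tail probability is squeezed between `c₀ exp (-t²κ²/2 - tκ²)` and `c₁ exp (-t²κ²/2)` with
`c₀, c₁ > 0`, so its logarithm is `-t²κ²/2 + O(t)`.
-/

open Matrix MeasureTheory Filter Asymptotics

section QuadraticForm

variable {ι : Type*} [Fintype ι]

theorem Matrix.IsHermitian.dotProduct_mulVec_smul_add {A : Matrix ι ι ℝ} (hA : A.IsHermitian)
    (t : ℝ) (u v : ι → ℝ) :
    (t • u + v) ⬝ᵥ A *ᵥ (t • u + v) =
      t ^ 2 * (u ⬝ᵥ A *ᵥ u) + 2 * t * (A *ᵥ u ⬝ᵥ v) + v ⬝ᵥ A *ᵥ v := by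
  have hsymm : u ⬝ᵥ A *ᵥ v = A *ᵥ u ⬝ᵥ v := by
    rw [dotProduct_mulVec, ← mulVec_transpose, ← conjTranspose_eq_transpose_of_trivial, hA.eq,
      dotProduct_comm]
  simp only [mulVec_add, mulVec_smul, dotProduct_add, add_dotProduct, dotProduct_smul,
    smul_dotProduct, smul_eq_mul, hsymm, dotProduct_comm v (A *ᵥ u)]
  ring

theorem Matrix.PosDef.exists_pos_mul_dotProduct_self_le {A : Matrix ι ι ℝ} (hA : A.PosDef) :
    ∃ ε > 0, ∀ v : ι → ℝ, ε * (v ⬝ᵥ v) ≤ v ⬝ᵥ A *ᵥ v := by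
  set ratio : (ι → ℝ) → ℝ := fun v => (v ⬝ᵥ A *ᵥ v) / (v ⬝ᵥ v)
  have hsq_pos : ∀ v : ι → ℝ, v ≠ 0 → 0 < v ⬝ᵥ v := fun v hv => by
    simpa using dotProduct_star_self_pos_iff.mpr hv
  -- the ratio is invariant under scaling, so its minimum on the unit sphere bounds it everywhere
  have hratio_smul : ∀ (c : ℝ) (v : ι → ℝ), c ≠ 0 → ratio (c • v) = ratio v := fun c v hc => by
    simp only [ratio, mulVec_smul, dotProduct_smul, smul_dotProduct, smul_eq_mul]
    rw [← mul_assoc, ← mul_assoc, mul_div_mul_left _ _ (mul_ne_zero hc hc)]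
  obtain ⟨ε, hε, hmin⟩ := (isCompact_sphere (0 : ι → ℝ) 1).exists_forall_le' (a := 0)
    (f := ratio)
    (ContinuousOn.div (by fun_prop) (by fun_prop) fun v hv =>
      (hsq_pos v (ne_zero_of_mem_sphere one_ne_zero ⟨v, hv⟩)).ne')
    fun v hv => have hv0 := ne_zero_of_mem_sphere one_ne_zero ⟨v, hv⟩
      div_pos (by simpa using hA.dotProduct_mulVec_pos hv0) (hsq_pos v hv0)
  refine ⟨ε, hε, fun v => ?_⟩
  rcases eq_or_ne v 0 with rfl | hv
  · simp
  have := hmin (‖v‖⁻¹ • v) (by simp [norm_smul, norm_ne_zero_iff.mpr hv])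
  rw [hratio_smul _ _ (inv_ne_zero (norm_ne_zero_iff.mpr hv)), le_div_iff₀ (hsq_pos v hv)] at this
  linarith

theorem Matrix.PosDef.integrable_exp_neg_mul_dotProduct_mulVec {A : Matrix ι ι ℝ} (hA : A.PosDef)
    {c : ℝ} (hc : 0 < c) : Integrable fun v : ι → ℝ => Real.exp (-c * (v ⬝ᵥ A *ᵥ v)) := by
  obtain ⟨ε, hε, hcoer⟩ := hA.exists_pos_mul_dotProduct_self_le
  have hprod : Integrable fun v : ι → ℝ => ∏ i, Real.exp (-(c * ε) * v i ^ 2) :=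
    Integrable.fintype_prod fun _ => integrable_exp_neg_mul_sq (by positivity)
  refine hprod.mono' (by fun_prop) (.of_forall fun v => ?_)
  rw [Real.norm_of_nonneg (Real.exp_pos _).le, ← Real.exp_sum, Real.exp_le_exp, ← Finset.mul_sum]
  have : v ⬝ᵥ v = ∑ i, v i ^ 2 := by simp [dotProduct, sq]
  rw [← this]
  nlinarith [mul_le_mul_of_nonneg_left (hcoer v) hc.le]

end QuadraticForm

theorem measurableSet_setOf_forall_le {ι : Type*} [Countable ι] (t : ℝ) :
    MeasurableSet {x : ι → ℝ | ∀ i, t ≤ x i} := by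
  measurability

section Translation

variable {G : Type*} [MeasurableSpace G] [AddGroup G] [MeasurableAdd G] {μ : Measure G}
  [μ.IsAddRightInvariant] {g : G → ENNReal}

theorem withDensity_le_mul_withDensity_univ_of_le_shift (hg : Measurable g) {s : Set G}
    (hs : MeasurableSet s) {a : G} {c : ENNReal} (h : ∀ x ∈ s, g x ≤ c * g (x - a)) :
    μ.withDensity g s ≤ c * μ.withDensity g Set.univ := by
  have hg_sub : Measurable fun x => g (x - a) :=
    hg.comp (measurePreserving_sub_right μ a).measurable
  rw [withDensity_apply _ hs, withDensity_apply _ .univ, Measure.restrict_univ]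
  calc ∫⁻ x in s, g x ∂μ ≤ ∫⁻ x in s, c * g (x - a) ∂μ := setLIntegral_mono (hg_sub.const_mul c) h
    _ ≤ ∫⁻ x, c * g (x - a) ∂μ := setLIntegral_le_lintegral _ _
    _ = c * ∫⁻ x, g x ∂μ := by rw [lintegral_const_mul _ hg_sub, lintegral_sub_right_eq_self g a]

theorem mul_withDensity_le_withDensity_preimage_sub_of_shift_le (hg : Measurable g) {s : Set G}
    (hs : MeasurableSet s) {a : G} {c : ENNReal} (h : ∀ x, x - a ∈ s → c * g (x - a) ≤ g x) :
    c * μ.withDensity g s ≤ μ.withDensity g ((· - a) ⁻¹' s) := by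
  have hsub := measurePreserving_sub_right μ a
  rw [withDensity_apply _ hs, withDensity_apply _ (hsub.measurable hs)]
  calc c * ∫⁻ x in s, g x ∂μ = ∫⁻ x in (· - a) ⁻¹' s, c * g (x - a) ∂μ := by
        rw [lintegral_const_mul (f := fun x => g (x - a)) _ (hg.comp hsub.measurable),
          hsub.setLIntegral_comp_preimage hs hg]
    _ ≤ ∫⁻ x in (· - a) ⁻¹' s, g x ∂μ := setLIntegral_mono hg h

end Translation

section Gaussian

variable {n : ℕ} {S : Matrix (Fin n) (Fin n) ℝ} {κ : ℝ}

noncomputable def gaussianPDF (S : Matrix (Fin n) (Fin n) ℝ) (u : Fin n → ℝ) : ℝ :=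
  ((2 * Real.pi) ^ n * S.det) ^ (-(1 : ℝ) / 2) * Real.exp (-(1 / 2) * (u ⬝ᵥ S⁻¹ *ᵥ u))

theorem gaussianOfCov_eq_withDensity (S : Matrix (Fin n) (Fin n) ℝ) :
    gaussianOfCov S = volume.withDensity fun u => ENNReal.ofReal (gaussianPDF S u) := rfl

theorem measurable_ofReal_gaussianPDF (S : Matrix (Fin n) (Fin n) ℝ) :
    Measurable fun u => ENNReal.ofReal (gaussianPDF S u) := by
  unfold gaussianPDF; fun_prop

theorem gaussianPDF_pos (hS : S.PosDef) (u : Fin n → ℝ) : 0 < gaussianPDF S u := by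
  have := hS.det_pos
  unfold gaussianPDF
  positivity

theorem isFiniteMeasure_gaussianOfCov (hS : S.PosDef) : IsFiniteMeasure (gaussianOfCov S) :=
  isFiniteMeasure_withDensity_ofReal
    ((hS.inv.integrable_exp_neg_mul_dotProduct_mulVec one_half_pos).const_mul _).hasFiniteIntegral

theorem gaussianPDF_smul_add (hS : S.IsHermitian) (t : ℝ) (u v : Fin n → ℝ) :
    gaussianPDF S (t • u + v) =
      Real.exp (-(1 / 2) * (t ^ 2 * (u ⬝ᵥ S⁻¹ *ᵥ u) + 2 * t * (S⁻¹ *ᵥ u ⬝ᵥ v))) *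
        gaussianPDF S v := by
  simp only [gaussianPDF, hS.inv.dotProduct_mulVec_smul_add]
  rw [mul_left_comm, ← Real.exp_add]
  ring_nf

theorem gaussianPDF_le_of_forall_le (hS : S.PosDef) (hw : 0 ≤ S⁻¹ *ᵥ fun _ => (1 : ℝ))
    (hκ : κ ^ 2 = (fun _ => (1 : ℝ)) ⬝ᵥ S⁻¹ *ᵥ fun _ => (1 : ℝ)) {t : ℝ} (ht : 0 ≤ t)
    {x : Fin n → ℝ} (hx : ∀ i, t ≤ x i) :
    gaussianPDF S x ≤ Real.exp (-(t ^ 2 * κ ^ 2 / 2)) * gaussianPDF S (x - t • fun _ => 1) := by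
  have hv : 0 ≤ x - t • fun _ => (1 : ℝ) := fun i => by simpa using hx i
  conv_lhs => rw [← add_sub_cancel (t • fun _ => (1 : ℝ)) x]
  rw [gaussianPDF_smul_add hS.isHermitian, ← hκ]
  refine mul_le_mul_of_nonneg_right (Real.exp_le_exp.mpr ?_) (gaussianPDF_pos hS _).le
  nlinarith [dotProduct_nonneg_of_nonneg hw hv]

theorem le_gaussianPDF_smul_add (hS : S.PosDef) (hw : 0 ≤ S⁻¹ *ᵥ fun _ => (1 : ℝ))
    (hκ : κ ^ 2 = (fun _ => (1 : ℝ)) ⬝ᵥ S⁻¹ *ᵥ fun _ => (1 : ℝ)) {t : ℝ} (ht : 0 ≤ t)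
    {v : Fin n → ℝ} (hv : v ∈ Set.Icc 0 1) :
    Real.exp (-(t ^ 2 * κ ^ 2 / 2) - t * κ ^ 2) * gaussianPDF S v ≤
      gaussianPDF S ((t • fun _ => 1) + v) := by
  have hwv : S⁻¹ *ᵥ (fun _ => (1 : ℝ)) ⬝ᵥ v ≤ κ ^ 2 := by
    rw [hκ, dotProduct_comm (fun _ => (1 : ℝ))]
    exact dotProduct_le_dotProduct_of_nonneg_left hv.2 hw
  rw [gaussianPDF_smul_add hS.isHermitian, ← hκ]
  refine mul_le_mul_of_nonneg_right (Real.exp_le_exp.mpr ?_) (gaussianPDF_pos hS _).le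
  nlinarith

theorem gaussianOfCov_tail_le (hS : S.PosDef) (hw : 0 ≤ S⁻¹ *ᵥ fun _ => (1 : ℝ))
    (hκ : κ ^ 2 = (fun _ => (1 : ℝ)) ⬝ᵥ S⁻¹ *ᵥ fun _ => (1 : ℝ)) {t : ℝ} (ht : 0 ≤ t) :
    gaussianOfCov S {x | ∀ i, t ≤ x i} ≤
      ENNReal.ofReal (Real.exp (-(t ^ 2 * κ ^ 2 / 2))) * gaussianOfCov S Set.univ := by
  rw [gaussianOfCov_eq_withDensity]
  refine withDensity_le_mul_withDensity_univ_of_le_shift (a := t • fun _ => 1)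
    (measurable_ofReal_gaussianPDF S)
    (measurableSet_setOf_forall_le t) fun x hx => ?_
  rw [← ENNReal.ofReal_mul (Real.exp_pos _).le]
  exact ENNReal.ofReal_le_ofReal (gaussianPDF_le_of_forall_le hS hw hκ ht hx)

theorem le_gaussianOfCov_tail (hS : S.PosDef) (hw : 0 ≤ S⁻¹ *ᵥ fun _ => (1 : ℝ))
    (hκ : κ ^ 2 = (fun _ => (1 : ℝ)) ⬝ᵥ S⁻¹ *ᵥ fun _ => (1 : ℝ)) {t : ℝ} (ht : 0 ≤ t) :
    ENNReal.ofReal (Real.exp (-(t ^ 2 * κ ^ 2 / 2) - t * κ ^ 2)) * gaussianOfCov S (Set.Icc 0 1) ≤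
      gaussianOfCov S {x | ∀ i, t ≤ x i} := by
  rw [gaussianOfCov_eq_withDensity]
  refine (mul_withDensity_le_withDensity_preimage_sub_of_shift_le (a := t • fun _ => 1)
    (measurable_ofReal_gaussianPDF S) measurableSet_Icc fun x hx => ?_).trans
    (measure_mono fun x hx i => ?_)
  · rw [← ENNReal.ofReal_mul (Real.exp_pos _).le]
    simpa using ENNReal.ofReal_le_ofReal (le_gaussianPDF_smul_add hS hw hκ ht hx)
  · simpa using hx.1 i

theorem gaussianOfCov_ne_zero (hS : S.PosDef) {s : Set (Fin n → ℝ)} (hs : volume s ≠ 0) :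
    gaussianOfCov S s ≠ 0 := by
  rw [gaussianOfCov_eq_withDensity, Ne,
    withDensity_apply_eq_zero' (measurable_ofReal_gaussianPDF S).aemeasurable]
  simpa [gaussianPDF_pos hS] using hs

theorem exists_log_gaussianOfCov_tail_bounds (hS : S.PosDef) (hw : 0 ≤ S⁻¹ *ᵥ fun _ => (1 : ℝ))
    (hκ : κ ^ 2 = (fun _ => (1 : ℝ)) ⬝ᵥ S⁻¹ *ᵥ fun _ => (1 : ℝ)) :
    ∃ a b : ℝ, ∀ t ≥ 0,
      a - κ ^ 2 * t ≤
          Real.log (gaussianOfCov S {x | ∀ i, t ≤ x i}).toReal + t ^ 2 * κ ^ 2 / 2 ∧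
        Real.log (gaussianOfCov S {x | ∀ i, t ≤ x i}).toReal + t ^ 2 * κ ^ 2 / 2 ≤ b := by
  have := isFiniteMeasure_gaussianOfCov hS
  set Z₀ := (gaussianOfCov S (Set.Icc 0 1)).toReal
  set Z := (gaussianOfCov S Set.univ).toReal
  have hZ₀ : 0 < Z₀ := ENNReal.toReal_pos (gaussianOfCov_ne_zero hS (by simp [Real.volume_Icc_pi]))
    (measure_ne_top _ _)
  have hZ : 0 < Z := ENNReal.toReal_pos (gaussianOfCov_ne_zero hS (NeZero.ne _))
    (measure_ne_top _ _)
  refine ⟨Real.log Z₀, Real.log Z, fun t ht => ?_⟩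
  set P := (gaussianOfCov S {x | ∀ i, t ≤ x i}).toReal
  have hlower : Real.exp (-(t ^ 2 * κ ^ 2 / 2) - t * κ ^ 2) * Z₀ ≤ P := by
    simpa [ENNReal.toReal_mul, (Real.exp_pos _).le] using
      ENNReal.toReal_mono (measure_ne_top _ _) (le_gaussianOfCov_tail hS hw hκ ht)
  have hupper : P ≤ Real.exp (-(t ^ 2 * κ ^ 2 / 2)) * Z := by
    simpa [ENNReal.toReal_mul, (Real.exp_pos _).le] using
      ENNReal.toReal_mono (by finiteness) (gaussianOfCov_tail_le hS hw hκ ht)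
  have hP : 0 < P := lt_of_lt_of_le (by positivity) hlower
  have hlog_lower := Real.log_le_log (by positivity) hlower
  have hlog_upper := Real.log_le_log hP hupper
  rw [Real.log_mul (Real.exp_pos _).ne' hZ₀.ne', Real.log_exp] at hlog_lower
  rw [Real.log_mul (Real.exp_pos _).ne' hZ.ne', Real.log_exp] at hlog_upper
  constructor <;> linarith

end Gaussian

section Asymptotics

theorem isBigO_id_atTop_of_sub_mul_le_of_le {f : ℝ → ℝ} {a b c : ℝ}
    (h : ∀ t ≥ 0, a - c * t ≤ f t ∧ f t ≤ b) : f =O[atTop] fun t => t := by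
  refine IsBigO.of_bound (|a| + |b| + |c|) ?_
  filter_upwards [eventually_ge_atTop 1] with t ht
  obtain ⟨hlower, hupper⟩ := h t (by linarith)
  rw [Real.norm_eq_abs, Real.norm_of_nonneg (by linarith), abs_le]
  have hct : c * t ≤ |c| * t := mul_le_mul_of_nonneg_right (le_abs_self c) (by linarith)
  have hat : |a| ≤ |a| * t := le_mul_of_one_le_right (abs_nonneg a) ht
  have hbt : |b| ≤ |b| * t := le_mul_of_one_le_right (abs_nonneg b) ht
  have hc : 0 ≤ |c| * t := mul_nonneg (abs_nonneg c) (by linarith)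
  constructor <;> nlinarith [neg_abs_le a, le_abs_self b, abs_nonneg a, abs_nonneg b]

theorem isEquivalent_neg_sq_mul_div_two_of_isBigO {F : ℝ → ℝ} {k : ℝ} (hk : k ≠ 0)
    (h : (fun t => F t + t ^ 2 * k / 2) =O[atTop] fun t => t) :
    F ~[atTop] fun t => -(t ^ 2 * k / 2) := by
  have hlin : (fun t : ℝ => t) =o[atTop] fun t => t ^ 2 := by
    simpa using isLittleO_pow_pow_atTop_of_lt (𝕜 := ℝ) one_lt_two
  have hsq : (fun t : ℝ => t ^ 2) =O[atTop] fun t => -(t ^ 2 * k / 2) := by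
    refine (isBigO_self_const_mul (c := -k / 2) (by simpa using hk) _ atTop).congr_right
      fun t => ?_
    ring
  have hdiff : (F - fun t => -(t ^ 2 * k / 2)) = fun t => F t + t ^ 2 * k / 2 := by
    ext t; simp [sub_neg_eq_add]
  unfold IsEquivalent
  rw [hdiff]
  exact (h.trans_isLittleO hlin).trans_isBigO hsq

theorem tendsto_div_sq_of_isEquivalent {F : ℝ → ℝ} {k : ℝ}
    (h : F ~[atTop] fun t => -(t ^ 2 * k / 2)) :
    Tendsto (fun t => F t / t ^ 2) atTop (nhds (-k / 2)) := by
  have hG : Tendsto (fun t : ℝ => -(t ^ 2 * k / 2) / t ^ 2) atTop (nhds (-k / 2)) :=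
    tendsto_const_nhds.congr' <| by
      filter_upwards [eventually_ne_atTop 0] with t ht
      field_simp
  exact (h.div IsEquivalent.refl).symm.tendsto_nhds hG

end Asymptotics

theorem stmt_8_general {n : ℕ} (S : Matrix (Fin n) (Fin n) ℝ)
    (hS : S.PosDef)
    (hpos : ∀ i, 0 < S⁻¹.mulVec (fun _ => (1 : ℝ)) i)
    (κ : ℝ) (hκpos : 0 < κ)
    (hκ : κ ^ 2 = (fun _ => (1 : ℝ)) ⬝ᵥ S⁻¹.mulVec (fun _ => (1 : ℝ))) :
    (fun t : ℝ => Real.log ((gaussianOfCov S {x | ∀ i, t ≤ x i}).toReal)) ~[atTop]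
      (fun t : ℝ => -(t ^ 2 * κ ^ 2 / 2)) ∧
    Tendsto (fun t : ℝ =>
        Real.log ((gaussianOfCov S {x | ∀ i, t ≤ x i}).toReal) / t ^ 2)
      atTop (nhds (-(κ ^ 2) / 2)) := by
  obtain ⟨a, b, hbounds⟩ := exists_log_gaussianOfCov_tail_bounds hS (fun i => (hpos i).le) hκ
  have hequiv := isEquivalent_neg_sq_mul_div_two_of_isBigO (pow_pos hκpos 2).ne'
    (isBigO_id_atTop_of_sub_mul_le_of_le hbounds)
  exact ⟨hequiv, tendsto_div_sq_of_isEquivalent hequiv⟩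

/-- Let `X ~ N(0, Σ)` with `Σ` positive definite and `Σ⁻¹ 𝟏 > 0`, and `κ² = 𝟏ᵀ Σ⁻¹ 𝟏`.
Then `ln Prob(min_i X_i ≥ t) ~ −t²κ²/2` as `t → ∞`; in particular
`t⁻² ln Prob(minᵢ Xᵢ ≥ t) → −κ²/2`, i.e. `κ² = −2 lim_{t→∞} t⁻² ln Prob(minᵢ Xᵢ ≥ t)`. -/
theorem stmt_8 {n : ℕ} [NeZero n] (S : Matrix (Fin n) (Fin n) ℝ)
    (hS : S.PosDef)
    (hpos : ∀ i, 0 < S⁻¹.mulVec (fun _ => (1 : ℝ)) i)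
    (κ : ℝ) (hκpos : 0 < κ)
    (hκ : κ ^ 2 = (fun _ => (1 : ℝ)) ⬝ᵥ S⁻¹.mulVec (fun _ => (1 : ℝ))) :
    (fun t : ℝ => Real.log ((gaussianOfCov S {x | ∀ i, t ≤ x i}).toReal)) ~[atTop]
      (fun t : ℝ => -(t ^ 2 * κ ^ 2 / 2)) ∧
    Tendsto (fun t : ℝ =>
        Real.log ((gaussianOfCov S {x | ∀ i, t ≤ x i}).toReal) / t ^ 2)
      atTop (nhds (-(κ ^ 2) / 2)) :=
  stmt_8_general S hS hpos κ hκpos hκ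
end

section
/- Fix 0 < a₀ < ⋯ < a_m and arbitrary constants γ₀, …, γ_m. The functions ρ ↦ arccos(aᵢ/ρ) + γᵢ, i = 0,…,m, are linearly independent on any nonempty open subinterval of (a_m, +∞). -/
/-!
Differentiating kills the constants `γᵢ`: since `d/dρ arccos (a/ρ) = (a/ρ) (ρ² - a²)^(-1/2)`,
the relation becomes `∑ cᵢ aᵢ (y - aᵢ²)^(-1/2) = 0` in `y = ρ²`. Differentiating that `k` times
gives `∑ cᵢ aᵢ (y - aᵢ²)^(-1/2-k) = 0` for every `k`; at a fixed `y` this is a Vandermonde system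
in the distinct nodes `(y - aᵢ²)⁻¹`, so all `cᵢ aᵢ` vanish.
-/

open Real Set

section Differentiation

variable {ι : Type*} [Fintype ι] {u v : ℝ}

theorem sum_mul_eq_zero_on_Ioo_of_hasDerivAt {c : ι → ℝ} {f f' : ι → ℝ → ℝ}
    (hf : ∀ i, ∀ y ∈ Ioo u v, HasDerivAt (f i) (f' i y) y)
    (h : ∀ y ∈ Ioo u v, ∑ i, c i * f i y = 0) :
    ∀ y ∈ Ioo u v, ∑ i, c i * f' i y = 0 := by
  intro y hy
  have hsum : HasDerivAt (fun x => ∑ i, c i * f i x) (∑ i, c i * f' i y) y :=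
    HasDerivAt.fun_sum fun i _ => (hf i y hy).const_mul (c i)
  have hlocal : (fun x => ∑ i, c i * f i x) =ᶠ[nhds y] fun _ => 0 := by
    filter_upwards [isOpen_Ioo.mem_nhds hy] using h
  exact hsum.unique ((hasDerivAt_const y 0).congr_of_eventuallyEq hlocal)

theorem sum_mul_rpow_sub_natCast_eq_zero {b d : ι → ℝ} {p : ℝ} (hb : ∀ i, b i ≤ u)
    (hp : ∀ k : ℕ, p ≠ k) (h : ∀ y ∈ Ioo u v, ∑ i, d i * (y - b i) ^ p = 0) (k : ℕ) :
    ∀ y ∈ Ioo u v, ∑ i, d i * (y - b i) ^ (p - k) = 0 := by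
  induction k with
  | zero => simpa using h
  | succ k ih =>
    have hderiv : ∀ i, ∀ y ∈ Ioo u v, HasDerivAt (fun x => (x - b i) ^ (p - k))
        ((p - k) * (y - b i) ^ (p - (k + 1 : ℕ))) y := by
      intro i y hy
      have hpos : y - b i ≠ 0 := by linarith [hb i, hy.1]
      refine (((hasDerivAt_id' y).sub_const (b i)).rpow_const (Or.inl hpos)).congr_deriv ?_
      rw [Nat.cast_succ, sub_add_eq_sub_sub, one_mul]
    intro y hy
    have hk := sum_mul_eq_zero_on_Ioo_of_hasDerivAt hderiv ih y hy
    simp only [mul_left_comm (d _), ← Finset.mul_sum] at hk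
    exact (mul_eq_zero.mp hk).resolve_left (sub_ne_zero.mpr (hp k))

end Differentiation

theorem eq_zero_of_sum_mul_rpow_sub_eq_zero {n : ℕ} {b d : Fin n → ℝ} {p u v : ℝ}
    (hb_inj : Function.Injective b) (hb : ∀ i, b i ≤ u) (huv : u < v) (hp : ∀ k : ℕ, p ≠ k)
    (h : ∀ y ∈ Ioo u v, ∑ i, d i * (y - b i) ^ p = 0) : d = 0 := by
  obtain ⟨y, hy⟩ := exists_between huv
  have hw : ∀ i, 0 < y - b i := fun i => by linarith [hb i]
  have hnodes : Function.Injective fun i => (y - b i)⁻¹ := fun i j hij =>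
    hb_inj (by simpa using hij)
  have hvand : ∀ k : Fin n, ∑ i, d i * (y - b i) ^ p * ((y - b i)⁻¹) ^ (k : ℕ) = 0 := by
    intro k
    rw [← sum_mul_rpow_sub_natCast_eq_zero hb hp h k y hy]
    refine Finset.sum_congr rfl fun i _ => ?_
    rw [rpow_sub (hw i), rpow_natCast, inv_pow, mul_assoc, div_eq_mul_inv]
  funext i
  have hi := congrFun (Matrix.eq_zero_of_forall_pow_sum_mul_pow_eq_zero hnodes hvand) i
  exact (mul_eq_zero.mp hi).resolve_right (rpow_pos_of_pos (hw i) p).ne'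

theorem hasDerivAt_arccos_div {a ρ : ℝ} (ha : |a| < ρ) :
    HasDerivAt (fun r => arccos (a / r)) (a / ρ * (ρ ^ 2 - a ^ 2) ^ (-(1 / 2) : ℝ)) ρ := by
  have hρ : 0 < ρ := (abs_nonneg a).trans_lt ha
  have hdiff : 0 < ρ ^ 2 - a ^ 2 := by nlinarith [sq_abs a, abs_nonneg a]
  obtain ⟨hlo, hhi⟩ : -1 < a / ρ ∧ a / ρ < 1 := by
    rw [← abs_lt, abs_div, abs_of_pos hρ, div_lt_one hρ]
    exact ha
  have hquot : HasDerivAt (fun r => a / r) (a * -(ρ ^ 2)⁻¹) ρ := by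
    simpa [div_eq_mul_inv] using (hasDerivAt_inv hρ.ne').const_mul a
  refine ((hasDerivAt_arccos hlo.ne' hhi.ne).comp ρ hquot).congr_deriv ?_
  have hsqrt : √(1 - (a / ρ) ^ 2) = √(ρ ^ 2 - a ^ 2) / ρ := by
    rw [show 1 - (a / ρ) ^ 2 = (ρ ^ 2 - a ^ 2) / ρ ^ 2 by field_simp, sqrt_div' _ (sq_nonneg ρ),
      sqrt_sq hρ.le]
  rw [hsqrt, rpow_neg hdiff.le, ← sqrt_eq_rpow]
  have hsqrt_pos : 0 < √(ρ ^ 2 - a ^ 2) := sqrt_pos.mpr hdiff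
  field_simp

theorem forall_mem_Ioo_sq_of_forall_sq_mem_Ioo {P : ℝ → Prop} {s t : ℝ} (ht : 0 ≤ t)
    (h : ∀ ρ ∈ Ioo s t, P (ρ ^ 2)) : ∀ y ∈ Ioo (s ^ 2) (t ^ 2), P y := by
  intro y hy
  have hρ : √y ∈ Ioo s t :=
    ⟨lt_sqrt_of_sq_lt hy.1, sqrt_sq ht ▸ sqrt_lt_sqrt ((sq_nonneg s).trans hy.1.le) hy.2⟩
  simpa [sq_sqrt ((sq_nonneg s).trans hy.1.le)] using h √y hρ

/-- For `0 < a₀ < ⋯ < a_m` and arbitrary constants `γ₀, …, γ_m`, the functions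
`ρ ↦ arccos(aᵢ/ρ) + γᵢ` are linearly independent on any nonempty open subinterval
of `(a_m, +∞)`. -/
theorem stmt_14 {m : ℕ} (a : Fin (m + 1) → ℝ) (h0 : 0 < a 0) (hmono : StrictMono a)
    (γ : Fin (m + 1) → ℝ)
    (s t : ℝ) (hst : s < t) (hs : a (Fin.last m) ≤ s)
    (c : Fin (m + 1) → ℝ)
    (hzero : ∀ ρ ∈ Set.Ioo s t,
      ∑ i, c i * (Real.arccos (a i / ρ) + γ i) = 0) :
    ∀ i, c i = 0 := by
  have ha : ∀ i, 0 < a i := fun i => h0.trans_le (hmono.monotone (Fin.zero_le i))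
  have has : ∀ i, a i ≤ s := fun i => (hmono.monotone (Fin.le_last i)).trans hs
  have hs0 : 0 < s := (ha 0).trans_le (has 0)
  have hderiv : ∀ ρ ∈ Ioo s t, ∑ i, c i * (a i / ρ * (ρ ^ 2 - a i ^ 2) ^ (-(1 / 2) : ℝ)) = 0 :=
    sum_mul_eq_zero_on_Ioo_of_hasDerivAt (fun i ρ hρ =>
      (hasDerivAt_arccos_div (by rw [abs_of_pos (ha i)]; linarith [has i, hρ.1])).add_const
        (γ i)) hzero
  have hdiv : ∀ ρ ∈ Ioo s t, ∑ i, c i * a i * (ρ ^ 2 - a i ^ 2) ^ (-(1 / 2) : ℝ) = 0 := by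
    intro ρ hρ
    have hfactor : ∑ i, c i * (a i / ρ * (ρ ^ 2 - a i ^ 2) ^ (-(1 / 2) : ℝ))
        = ρ⁻¹ * ∑ i, c i * a i * (ρ ^ 2 - a i ^ 2) ^ (-(1 / 2) : ℝ) := by
      rw [Finset.mul_sum]
      exact Finset.sum_congr rfl fun i _ => by ring
    have h := hderiv ρ hρ
    rw [hfactor] at h
    exact (mul_eq_zero.mp h).resolve_left (inv_ne_zero (hs0.trans hρ.1).ne')
  have hsq : ∀ y ∈ Ioo (s ^ 2) (t ^ 2), ∑ i, c i * a i * (y - a i ^ 2) ^ (-(1 / 2) : ℝ) = 0 :=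
    forall_mem_Ioo_sq_of_forall_sq_mem_Ioo (P := fun y => _ = 0) (hs0.trans hst).le hdiv
  have hca := eq_zero_of_sum_mul_rpow_sub_eq_zero (b := fun i => a i ^ 2)
    (fun i j hij => hmono.injective ((pow_left_inj₀ (ha i).le (ha j).le two_ne_zero).mp hij))
    (fun i => pow_le_pow_left₀ (ha i).le (has i) 2) (pow_lt_pow_left₀ hst hs0.le two_ne_zero)
    (fun k hk => by linarith [k.cast_nonneg (α := ℝ)]) hsq
  intro i
  exact (mul_eq_zero.mp (congrFun hca i)).resolve_right (ha i).ne'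
end
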